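/- arXiv:2310.13202 — 3 statements merged into one kernel-verified Lean document; each statement's English description precedes it below -/
import Mathlib

section
/- Let Φ be a Young function and let g : Ω × ℝᴺ → ℝ satisfy: g(·,λ) measurable for all λ, g(ω,·) convex for a.e. ω, and |g(ω,λ)| ≤ c₀(1 + Φ(|λ|)) for all λ and a.e. ω, with c₀ > 0. Then g is locally Lipschitz in the second argument with the explicit estimate |g(ω,λ) − g(ω,ν)| ≤ 2Nc₀ · (1 + Φ(2(1+|λ|+|ν|)))/(1+|λ|+|ν|) · |λ−ν| for all λ,ν ∈ ℝᴺ and a.e. ω ∈ Ω. -/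
open MeasureTheory Filter Set Topology

noncomputable def luxNorm {α : Type*} [MeasurableSpace α] (Φ : ℝ → ℝ) (μ : Measure α)
    (f : α → ℝ) : ℝ :=
  sInf {δ : ℝ | 0 < δ ∧ ∫⁻ a, ENNReal.ofReal (Φ (|f a| / δ)) ∂μ ≤ 1}

def MemLPhi {α : Type*} [MeasurableSpace α] (Φ : ℝ → ℝ) (μ : Measure α) (f : α → ℝ) : Prop :=
  Measurable f ∧ ∃ δ > 0, ∫⁻ a, ENNReal.ofReal (Φ (|f a| / δ)) ∂μ < ⊤

structure IsYoung (Φ : ℝ → ℝ) : Prop where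
  continuousOn : ContinuousOn Φ (Ici 0)
  convexOn : ConvexOn ℝ (Ici 0) Φ
  map_zero : Φ 0 = 0
  pos : ∀ t > 0, 0 < Φ t
  tendsto_zero : Tendsto (fun t => Φ t / t) (𝓝[>] (0:ℝ)) (𝓝 0)
  tendsto_top : Tendsto (fun t => Φ t / t) atTop atTop

structure IsYoungDensity (Φ φ : ℝ → ℝ) : Prop where
  mono : MonotoneOn φ (Ici 0)
  rightCont : ∀ t ≥ 0, ContinuousWithinAt φ (Ici t) t
  map_zero : φ 0 = 0
  pos : ∀ t > 0, 0 < φ t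
  tendsto_top : Tendsto φ atTop atTop
  repr : ∀ t ≥ 0, Φ t = ∫ τ in (0:ℝ)..t, φ τ

noncomputable def youngConj (Φ : ℝ → ℝ) (t : ℝ) : ℝ :=
  sSup {y : ℝ | ∃ s ≥ (0:ℝ), y = s * t - Φ s}

def Delta2 (Φ : ℝ → ℝ) : Prop := ∃ t₀ > 0, ∃ k > 2, ∀ t ≥ t₀, Φ (2 * t) ≤ k * Φ t

def DeltaPrime (Φ : ℝ → ℝ) : Prop :=
  ∃ β > 0, ∀ t ≥ (0:ℝ), ∀ s ≥ (0:ℝ), Φ (t * s) ≤ β * Φ t * Φ s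

open Metric

/- A convex function bounded by `M` on the ball of radius `2R` is `2M/R`-Lipschitz on the ball of
radius `R`; with `R = 1 + ‖v‖ + ‖w‖` the growth bound gives `M = c₀ (1 + Φ (2R))`. -/

lemma IsYoung.nonneg {Φ : ℝ → ℝ} (hY : IsYoung Φ) {t : ℝ} (ht : 0 ≤ t) : 0 ≤ Φ t := by
  rcases ht.eq_or_lt with rfl | ht
  · exact hY.map_zero.ge
  · exact (hY.pos t ht).le

lemma IsYoung.monotoneOn {Φ : ℝ → ℝ} (hY : IsYoung Φ) : MonotoneOn Φ (Ici 0) := by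
  intro s hs t ht hst
  rcases (mem_Ici.1 hs).eq_or_lt with rfl | hs₀
  · exact hY.map_zero.symm ▸ hY.nonneg ht
  rcases hst.eq_or_lt with rfl | hst
  · rfl
  -- convexity on `[0, t]` with `Φ 0 = 0` gives `t Φ s ≤ s Φ t`
  have h := hY.convexOn.secant_mono_aux1 self_mem_Ici ht hs₀ hst
  rw [hY.map_zero, mul_zero, zero_add, sub_zero, sub_zero] at h
  nlinarith [hY.nonneg (mem_Ici.1 ht)]

lemma ConvexOn.abs_sub_le_of_abs_le_mul_one_add
    {E : Type*} [NormedAddCommGroup E] [NormedSpace ℝ E] {Φ : ℝ → ℝ} (hΦ : MonotoneOn Φ (Ici 0))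
    {f : E → ℝ} (hf : ConvexOn ℝ univ f) {c₀ : ℝ} (hc₀ : 0 ≤ c₀)
    (hbound : ∀ v, |f v| ≤ c₀ * (1 + Φ ‖v‖)) (v w : E) :
    |f v - f w| ≤ 2 * c₀ * ((1 + Φ (2 * (1 + ‖v‖ + ‖w‖))) / (1 + ‖v‖ + ‖w‖)) * ‖v - w‖ := by
  set R := 1 + ‖v‖ + ‖w‖
  have hR : 0 < R := by positivity
  set M := c₀ * (1 + Φ (2 * R))
  have hM : ∀ a, dist a 0 < 2 * R → |f a| ≤ M := fun a ha ↦ by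
    rw [dist_zero_right] at ha
    refine (hbound a).trans (mul_le_mul_of_nonneg_left ?_ hc₀)
    gcongr
    exact hΦ (norm_nonneg a) (by simp only [mem_Ici]; positivity) ha.le
  have hM₀ : 0 ≤ M := (abs_nonneg _).trans (hM 0 (by simpa using hR))
  have hLip := (hf.subset (subset_univ _) (convex_ball 0 _)).lipschitzOnWith_of_abs_le hR hM
  rw [show 2 * R - R = R by ring] at hLip
  have hv : v ∈ ball (0 : E) R := by simp only [mem_ball_zero_iff, R]; linarith [norm_nonneg w]
  have hw : w ∈ ball (0 : E) R := by simp only [mem_ball_zero_iff, R]; linarith [norm_nonneg v]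
  calc |f v - f w| = dist (f v) (f w) := (Real.dist_eq _ _).symm
    _ ≤ (2 * M / R).toNNReal * dist v w := hLip.dist_le_mul v hv w hw
    _ = _ := by
      rw [Real.coe_toNNReal _ (by positivity), dist_eq_norm]
      ring

theorem stmt10_general {N : ℕ} {Ω : Type*} [MeasurableSpace Ω] (μ : Measure Ω)
    (Φ : ℝ → ℝ) (hY : IsYoung Φ)
    (g : Ω → EuclideanSpace ℝ (Fin N) → ℝ) (c₀ : ℝ) (hc₀ : 0 < c₀)
    (hconv : ∀ᵐ ω ∂μ, ConvexOn ℝ univ (g ω))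
    (hbound : ∀ᵐ ω ∂μ, ∀ v, |g ω v| ≤ c₀ * (1 + Φ ‖v‖)) :
    ∀ᵐ ω ∂μ, ∀ v w : EuclideanSpace ℝ (Fin N),
      |g ω v - g ω w| ≤
        2 * N * c₀ * ((1 + Φ (2 * (1 + ‖v‖ + ‖w‖))) / (1 + ‖v‖ + ‖w‖)) * ‖v - w‖ := by
  filter_upwards [hconv, hbound] with ω hconvω hboundω v w
  rcases Nat.eq_zero_or_pos N with rfl | hN
  · simp [Subsingleton.elim v w]
  have hN : (1 : ℝ) ≤ N := by exact_mod_cast hN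
  refine (hconvω.abs_sub_le_of_abs_le_mul_one_add hY.monotoneOn hc₀.le hboundω v w).trans ?_
  have hΦ := hY.nonneg (t := 2 * (1 + ‖v‖ + ‖w‖)) (by positivity)
  rw [mul_assoc 2 (N : ℝ)]
  gcongr
  exact le_mul_of_one_le_left hc₀.le hN

theorem stmt10 {N : ℕ} {Ω : Type*} [MeasurableSpace Ω] (μ : Measure Ω)
    (Φ : ℝ → ℝ) (hY : IsYoung Φ)
    (g : Ω → EuclideanSpace ℝ (Fin N) → ℝ) (c₀ : ℝ) (hc₀ : 0 < c₀)
    (hmeas : ∀ v, Measurable fun ω => g ω v)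
    (hconv : ∀ᵐ ω ∂μ, ConvexOn ℝ univ (g ω))
    (hbound : ∀ᵐ ω ∂μ, ∀ v, |g ω v| ≤ c₀ * (1 + Φ ‖v‖)) :
    ∀ᵐ ω ∂μ, ∀ v w : EuclideanSpace ℝ (Fin N),
      |g ω v - g ω w| ≤
        2 * N * c₀ * ((1 + Φ (2 * (1 + ‖v‖ + ‖w‖))) / (1 + ‖v‖ + ‖w‖)) * ‖v - w‖ :=
  stmt10_general μ Φ hY g c₀ hc₀ hconv hbound
end

section
/- Let f : Ω × ℝᴺ → ℝ be measurable in ω, convex in λ, and satisfy c₁Φ(|λ|) ≤ f(ω,λ) ≤ c₂(1+Φ(|λ|)). For n ≥ 1 let θ_n ∈ C_0^∞(ℝᴺ) be nonnegative with supp θ_n ⊂ (1/n)B̄_N and ∫θ_n = 1, and define the regularization f_n(ω,λ) = ∫ θ_n(η) f(ω, λ−η) dη. Then there exists a constant c₀′ > 0 (independent of n) such that for a.e. ω and every λ ∈ ℝᴺ: f_n(ω,λ) ≤ f(ω,λ) + (c₀′/n)(1 + φ(2(1+|λ|))), where φ is the density of Φ. -/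
open MeasureTheory Filter Set Topology

structure IsYoungDensity' (Φ φ : ℝ → ℝ) : Prop where
  mono : MonotoneOn φ (Ici 0)
  map_zero : φ 0 = 0
  repr : ∀ t ≥ 0, Φ t = ∫ τ in (0:ℝ)..t, φ τ

lemma phi_nonneg {Φ φd : ℝ → ℝ} (hd : IsYoungDensity' Φ φd) {t : ℝ} (ht : 0 ≤ t) :
    0 ≤ φd t := by
  have := hd.mono (self_mem_Ici) ht ht
  rwa [hd.map_zero] at this

lemma phi_intInt {Φ φd : ℝ → ℝ} (hd : IsYoungDensity' Φ φd) {a b : ℝ} (ha : 0 ≤ a) (hb : 0 ≤ b) :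
    IntervalIntegrable φd volume a b := by
  apply MonotoneOn.intervalIntegrable
  exact hd.mono.mono (by
    rcases le_total a b with h | h
    · rw [uIcc_of_le h]; exact fun x hx => le_trans ha hx.1
    · rw [uIcc_of_ge h]; exact fun x hx => le_trans hb hx.1)

lemma Phi_mono {Φ φd : ℝ → ℝ} (hd : IsYoungDensity' Φ φd) {a b : ℝ} (ha : 0 ≤ a) (hab : a ≤ b) :
    Φ a ≤ Φ b := by
  have hb : 0 ≤ b := ha.trans hab
  rw [hd.repr a ha, hd.repr b hb,
    ← intervalIntegral.integral_add_adjacent_intervals (phi_intInt hd le_rfl ha) (phi_intInt hd ha hb)]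
  have : 0 ≤ ∫ τ in a..b, φd τ :=
    intervalIntegral.integral_nonneg hab (fun u hu => phi_nonneg hd (ha.trans hu.1))
  linarith

lemma Phi_le {Φ φd : ℝ → ℝ} (hd : IsYoungDensity' Φ φd) {T : ℝ} (hT : 0 ≤ T) :
    Φ T ≤ T * φd T := by
  rw [hd.repr T hT]
  calc ∫ τ in (0:ℝ)..T, φd τ ≤ ∫ _ in (0:ℝ)..T, φd T := by
        apply intervalIntegral.integral_mono_on hT (phi_intInt hd le_rfl hT)
          intervalIntegrable_const
        exact fun x hx => hd.mono (mem_Ici.2 hx.1) hT hx.2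
    _ = T * φd T := by simp [mul_comm]

lemma key_lip {N : ℕ} {Φ φd : ℝ → ℝ} (hd : IsYoungDensity' Φ φd) {c₂ : ℝ} (hc₂ : 0 < c₂)
    {g : EuclideanSpace ℝ (Fin N) → ℝ} (hg : ConvexOn ℝ univ g) (hg0 : ∀ w, 0 ≤ g w)
    (hgu : ∀ w, g w ≤ c₂ * (1 + Φ ‖w‖)) (v η : EuclideanSpace ℝ (Fin N)) (hη : ‖η‖ ≤ 1) :
    g (v - η) ≤ g v + ‖η‖ * (2 * c₂ * (1 + φd (2 * (1 + ‖v‖)))) := by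
  set T : ℝ := 2 * (1 + ‖v‖) with hT
  have hv0 : (0:ℝ) ≤ ‖v‖ := norm_nonneg v
  have hT0 : 0 ≤ T := by positivity
  have hφT : 0 ≤ φd T := phi_nonneg hd hT0
  by_cases h0 : η = 0
  · simp only [h0, norm_zero, sub_zero, zero_mul, add_zero, le_refl]
  set t : ℝ := ‖η‖ with ht
  have ht0 : 0 < t := norm_pos_iff.2 h0
  set R : ℝ := 2 + ‖v‖ with hR
  have hR0 : (0:ℝ) < R := by positivity
  have htR : t ≤ R := le_trans hη (by linarith)
  set b : ℝ := t / R with hb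
  have hb0 : 0 < b := div_pos ht0 hR0
  have hb1 : b ≤ 1 := (div_le_one hR0).2 htR
  set y := v - (R / t) • η with hy
  have hcomb : (1 - b) • v + b • y = v - η := by
    rw [hy, smul_sub, smul_smul]
    have : b * (R / t) = 1 := by rw [hb]; field_simp
    rw [this, one_smul, sub_smul, one_smul]
    abel
  have hcv := hg.2 (mem_univ v) (mem_univ y) (show (0:ℝ) ≤ 1 - b by linarith) hb0.le (show (1 - b) + b = 1 by ring)
  rw [hcomb] at hcv
  have hyn : ‖y‖ ≤ T := by
    have : ‖y‖ ≤ ‖v‖ + ‖(R / t) • η‖ := norm_sub_le _ _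
    rw [norm_smul, Real.norm_eq_abs, abs_of_pos (div_pos hR0 ht0)] at this
    have : ‖y‖ ≤ ‖v‖ + R := by
      rw [div_mul_eq_mul_div, mul_div_assoc] at this
      rw [← ht, div_self ht0.ne', mul_one] at this; exact this
    linarith [this]
  have hgy : g y ≤ c₂ * (1 + T * φd T) := by
    calc g y ≤ c₂ * (1 + Φ ‖y‖) := hgu y
      _ ≤ c₂ * (1 + Φ T) := by
          have := Phi_mono hd (norm_nonneg y) hyn
          nlinarith
      _ ≤ c₂ * (1 + T * φd T) := by
          have := Phi_le hd hT0
          nlinarith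
  have hbgy : b * g y ≤ t * (2 * c₂ * (1 + φd T)) := by
    have h1 : b * g y ≤ b * (c₂ * (1 + T * φd T)) := by
      exact mul_le_mul_of_nonneg_left hgy hb0.le
    have h2 : b * (c₂ * (1 + T * φd T)) ≤ t * (2 * c₂ * (1 + φd T)) := by
      rw [hb, div_mul_eq_mul_div, div_le_iff₀ hR0]
      have hTR : T ≤ 2 * R := by rw [hT, hR]; linarith
      have h3 : 0 ≤ c₂ * t * (2 * R - 1) :=
        mul_nonneg (mul_pos hc₂ ht0).le (by rw [hR]; linarith)
      have h4 : 0 ≤ c₂ * t * φd T * (2 * R - T) :=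
        mul_nonneg (mul_nonneg (mul_pos hc₂ ht0).le hφT) (by linarith)
      nlinarith [h3, h4]
    linarith
  have hgv := hg0 v
  calc g (v - η) ≤ (1 - b) * g v + b * g y := hcv
    _ ≤ g v + b * g y := by nlinarith
    _ ≤ g v + t * (2 * c₂ * (1 + φd T)) := by linarith

lemma Phi_nonneg {Φ φd : ℝ → ℝ} (hd : IsYoungDensity' Φ φd) {s : ℝ} (hs : 0 ≤ s) :
    0 ≤ Φ s := by
  rw [hd.repr s hs]
  exact intervalIntegral.integral_nonneg hs (fun u hu => phi_nonneg hd hu.1)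

theorem stmt11' {N : ℕ} {Ω : Type*} [MeasurableSpace Ω] (μ : Measure Ω)
    [IsProbabilityMeasure μ]
    (Φ φd : ℝ → ℝ) (hd : IsYoungDensity' Φ φd)
    (f : Ω → EuclideanSpace ℝ (Fin N) → ℝ) (c₁ c₂ : ℝ) (hc₁ : 0 < c₁) (hc₂ : 0 < c₂)
    (hconv : ∀ᵐ ω ∂μ, ConvexOn ℝ univ (f ω))
    (hgrowth : ∀ᵐ ω ∂μ, ∀ v, c₁ * Φ ‖v‖ ≤ f ω v ∧ f ω v ≤ c₂ * (1 + Φ ‖v‖))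
    (θ : ℕ → EuclideanSpace ℝ (Fin N) → ℝ)
    (hθ : ∀ n : ℕ, 1 ≤ n → ContDiff ℝ (⊤ : ℕ∞) (θ n) ∧ HasCompactSupport (θ n) ∧
      (∀ η, 0 ≤ θ n η) ∧ tsupport (θ n) ⊆ Metric.closedBall 0 (1 / n) ∧ (∫ η, θ n η) = 1) :
    ∃ c₀' > (0:ℝ), ∀ n : ℕ, 1 ≤ n → ∀ᵐ ω ∂μ, ∀ v,
      (∫ η, θ n η * f ω (v - η)) ≤ f ω v + (c₀' / n) * (1 + φd (2 * (1 + ‖v‖))) := by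
  refine ⟨2 * c₂, by positivity, fun n hn => ?_⟩
  obtain ⟨hθc, hθcs, hθpos, hθsub, hθint⟩ := hθ n hn
  have hn0 : (0:ℝ) < n := by exact_mod_cast hn
  have hn1 : (1:ℝ) / n ≤ 1 := by
    rw [div_le_one hn0]; exact_mod_cast hn
  filter_upwards [hconv, hgrowth] with ω hcv hgr
  intro v
  set K : ℝ := 2 * c₂ * (1 + φd (2 * (1 + ‖v‖))) with hK
  have hφnn : 0 ≤ φd (2 * (1 + ‖v‖)) := phi_nonneg hd (by positivity)
  have hK0 : 0 ≤ K := by positivity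
  have hg0 : ∀ w, 0 ≤ f ω w := fun w =>
    le_trans (mul_nonneg hc₁.le (Phi_nonneg hd (norm_nonneg w))) (hgr w).1
  have hfc : Continuous (f ω) :=
    continuousOn_univ.1 (hcv.continuousOn isOpen_univ)
  have hpt : ∀ η, θ n η * f ω (v - η) ≤ θ n η * (f ω v + (1 / n) * K) := by
    intro η
    by_cases hmem : η ∈ tsupport (θ n)
    · have h1 : ‖η‖ ≤ 1 / n := by
        have := hθsub hmem
        simpa [Metric.mem_closedBall, dist_zero_right] using this
      have hkey := key_lip hd hc₂ hcv hg0 (fun w => (hgr w).2) v η (h1.trans hn1)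
      have : f ω (v - η) ≤ f ω v + (1 / n) * K := by
        have := mul_le_mul_of_nonneg_right h1 hK0
        calc f ω (v - η) ≤ f ω v + ‖η‖ * K := hkey
          _ ≤ f ω v + (1 / n) * K := by linarith
      exact mul_le_mul_of_nonneg_left this (hθpos η)
    · have hz : θ n η = 0 := image_eq_zero_of_notMem_tsupport hmem
      simp [hz]
  have hint1 : Integrable (fun η => θ n η * f ω (v - η)) := by
    apply Continuous.integrable_of_hasCompactSupport
    · exact hθc.continuous.mul (hfc.comp (continuous_const.sub continuous_id))
    · exact hθcs.mul_right
  have hint2 : Integrable (fun η => θ n η * (f ω v + (1 / n) * K)) :=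
    (hθc.continuous.integrable_of_hasCompactSupport hθcs).mul_const _
  calc (∫ η, θ n η * f ω (v - η)) ≤ ∫ η, θ n η * (f ω v + (1 / n) * K) :=
        integral_mono hint1 hint2 hpt
    _ = (∫ η, θ n η) * (f ω v + (1 / n) * K) := integral_mul_const _ _
    _ = f ω v + (2 * c₂ / n) * (1 + φd (2 * (1 + ‖v‖))) := by
        rw [hθint, one_mul, hK]; ring

theorem stmt11 {N : ℕ} {Ω : Type*} [MeasurableSpace Ω] (μ : Measure Ω)
    [IsProbabilityMeasure μ]
    (Φ φd : ℝ → ℝ) (hY : IsYoung Φ) (hd : IsYoungDensity Φ φd)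
    (f : Ω → EuclideanSpace ℝ (Fin N) → ℝ) (c₁ c₂ : ℝ) (hc₁ : 0 < c₁) (hc₂ : 0 < c₂)
    (hmeas : ∀ v, Measurable fun ω => f ω v)
    (hconv : ∀ᵐ ω ∂μ, ConvexOn ℝ univ (f ω))
    (hgrowth : ∀ᵐ ω ∂μ, ∀ v, c₁ * Φ ‖v‖ ≤ f ω v ∧ f ω v ≤ c₂ * (1 + Φ ‖v‖))
    (θ : ℕ → EuclideanSpace ℝ (Fin N) → ℝ)
    (hθ : ∀ n : ℕ, 1 ≤ n → ContDiff ℝ (⊤ : ℕ∞) (θ n) ∧ HasCompactSupport (θ n) ∧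
      (∀ η, 0 ≤ θ n η) ∧ tsupport (θ n) ⊆ Metric.closedBall 0 (1 / n) ∧ (∫ η, θ n η) = 1) :
    ∃ c₀' > (0:ℝ), ∀ n : ℕ, 1 ≤ n → ∀ᵐ ω ∂μ, ∀ v,
      (∫ η, θ n η * f ω (v - η)) ≤ f ω v + (c₀' / n) * (1 + φd (2 * (1 + ‖v‖))) := by
  exact stmt11' μ Φ φd ⟨hd.mono, hd.map_zero, hd.repr⟩ f c₁ c₂ hc₁ hc₂ hconv hgrowth θ hθ
end

section
/- Let Φ ∈ Δ₂ with Φ̃ ∈ Δ₂ ∩ Δ′, Q ⊂ ℝ^{N₁} and Q₂ ⊂ ℝ^{N₂} bounded open sets. If u ∈ L^Φ(Q×Q₂) then for a.e. x₁ ∈ Q, u(x₁,·) ∈ L^Φ(Q₂), and u belongs to the Orlicz–Bochner space L^Φ(Q, L^Φ(Q₂)) with ‖u‖_{L^Φ(Q,L^Φ(Q₂))} ≤ ∬_{Q×Q₂} Φ(|u(x₁,x₂)|) dx₁ dx₂ + β, where β is the Δ′-constant of Φ̃. -/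
open MeasureTheory Filter Set Topology

/-!
Young's inequality is an equality at a subgradient, so the `Δ'` condition on the conjugate `Φ*`
turns into the reverse estimate `δ c Φ(w) ≤ Φ(δ w)` for `Φ`, valid whenever `β Φ*(c) ≤ δ c`.
Taking `c` a subgradient at `δ / δ₀` with `β ≤ δ₀` and `δ` just below the Luxemburg norm of `v`
gives `Φ(‖v‖ / δ₀) ≤ (∫ Φ(|v|)) / δ₀`. Applied to the slices `v = u(x, ·)` and integrated in `x`
by Tonelli, this shows that `δ₀ = ∬ Φ(|u|) + β` is admissible for the outer Luxemburg norm.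
Tonelli also makes almost every slice modular-finite.
-/

lemma ConvexOn.add_rightDeriv_mul_sub_le {S : Set ℝ} {f : ℝ → ℝ} {x y : ℝ} (hf : ConvexOn ℝ S f)
    (hx : x ∈ interior S) (hy : y ∈ S) :
    f x + derivWithin f (Ioi x) x * (y - x) ≤ f y := by
  rcases lt_trichotomy y x with hyx | rfl | hxy
  · have hslope := (hf.slope_le_leftDeriv_of_mem_interior hy hx hyx).trans
      (hf.leftDeriv_le_rightDeriv_of_mem_interior hx)
    rw [slope_def_field, div_le_iff₀ (sub_pos.2 hyx)] at hslope
    linarith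
  · simp
  · have hslope := hf.rightDeriv_le_slope_of_mem_interior hx hy hxy
    rw [slope_def_field, le_div_iff₀ (sub_pos.2 hxy)] at hslope
    linarith

lemma youngConj_le_of_forall_add_mul_sub_le {Φ : ℝ → ℝ} {t c : ℝ}
    (h : ∀ s ≥ 0, Φ t + c * (s - t) ≤ Φ s) : youngConj Φ c ≤ t * c - Φ t := by
  refine csSup_le ⟨0 * c - Φ 0, 0, le_rfl, rfl⟩ ?_
  rintro _ ⟨s, hs, rfl⟩
  linarith [h s hs]

namespace IsYoung

variable {Φ : ℝ → ℝ}

lemma nonneg_s19 (hY : IsYoung Φ) {t : ℝ} (ht : 0 ≤ t) : 0 ≤ Φ t := by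
  rcases ht.eq_or_lt with rfl | ht
  · exact hY.map_zero.ge
  · exact (hY.pos t ht).le

lemma bddAbove_youngConj_set (hY : IsYoung Φ) (b : ℝ) :
    BddAbove {y : ℝ | ∃ s ≥ (0:ℝ), y = s * b - Φ s} := by
  obtain ⟨M, hM⟩ := eventually_atTop.1
    ((hY.tendsto_top.eventually_ge_atTop |b|).and (eventually_gt_atTop 0))
  refine ⟨max M 0 * |b|, ?_⟩
  rintro _ ⟨s, hs, rfl⟩
  have hsb : s * b ≤ s * |b| := mul_le_mul_of_nonneg_left (le_abs_self b) hs
  rcases le_or_gt s M with hsM | hMs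
  · have : s * |b| ≤ max M 0 * |b| :=
      mul_le_mul_of_nonneg_right (hsM.trans (le_max_left M 0)) (abs_nonneg b)
    linarith [hY.nonneg_s19 hs]
  · obtain ⟨hΦs, hs0⟩ := hM s hMs.le
    rw [le_div_iff₀ hs0] at hΦs
    nlinarith [abs_nonneg b, le_max_right M 0]

lemma mul_sub_le_youngConj (hY : IsYoung Φ) {a : ℝ} (ha : 0 ≤ a) (b : ℝ) :
    a * b - Φ a ≤ youngConj Φ b :=
  le_csSup (hY.bddAbove_youngConj_set b) ⟨a, ha, rfl⟩

lemma youngConj_nonneg (hY : IsYoung Φ) (b : ℝ) : 0 ≤ youngConj Φ b := by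
  simpa [hY.map_zero] using hY.mul_sub_le_youngConj le_rfl b

/-- Young's inequality is an equality at the right derivative of `Φ` at `t`, a subgradient. -/
lemma exists_youngConj_le (hY : IsYoung Φ) {t : ℝ} (ht : 0 < t) :
    ∃ c ≥ 0, youngConj Φ c ≤ t * c - Φ t := by
  have hsub : ∀ s ≥ 0, Φ t + derivWithin Φ (Ioi t) t * (s - t) ≤ Φ s := fun s hs =>
    hY.convexOn.add_rightDeriv_mul_sub_le (by rwa [interior_Ici]) hs
  refine ⟨_, ?_, youngConj_le_of_forall_add_mul_sub_le hsub⟩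
  have := hsub 0 le_rfl
  rw [hY.map_zero] at this
  nlinarith [hY.pos t ht]

lemma measurable_comp (hY : IsYoung Φ) {α : Type*} [MeasurableSpace α] {g : α → ℝ}
    (hg : Measurable g) (hg0 : ∀ x, 0 ≤ g x) : Measurable fun x => Φ (g x) := by
  have hcont : Continuous fun t => Φ (max t 0) :=
    hY.continuousOn.comp_continuous (continuous_id.max continuous_const) fun _ =>
      mem_Ici.2 (le_max_right _ _)
  convert hcont.measurable.comp hg using 2 with x
  simp [max_eq_left (hg0 x)]

end IsYoung

/-- With `g` a subgradient at `w`: Young's inequality at `(δ w, g c)`, its equality case at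
`(w, g)` and `Δ'` for the conjugate at `(g, c)`. -/
lemma IsYoung.mul_mul_apply_le_apply_mul {Φ : ℝ → ℝ} (hY : IsYoung Φ) {β : ℝ}
    (hΔ' : ∀ t ≥ (0:ℝ), ∀ s ≥ (0:ℝ), youngConj Φ (t * s) ≤ β * youngConj Φ t * youngConj Φ s)
    {c δ : ℝ} (hc : 0 ≤ c) (hδ : 0 ≤ δ) (hcδ : β * youngConj Φ c ≤ δ * c)
    {w : ℝ} (hw : 0 ≤ w) : δ * c * Φ w ≤ Φ (δ * w) := by
  rcases hw.eq_or_lt with rfl | hw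
  · simp [hY.map_zero]
  obtain ⟨g, hg, hgw⟩ := hY.exists_youngConj_le hw
  have hyoung := hY.mul_sub_le_youngConj (mul_nonneg hδ hw.le) (g * c)
  have hprod : β * youngConj Φ g * youngConj Φ c ≤ youngConj Φ g * (δ * c) := by
    rw [mul_comm β, mul_assoc]
    exact mul_le_mul_of_nonneg_left hcδ (hY.youngConj_nonneg g)
  have hgw' := mul_le_mul_of_nonneg_left hgw (mul_nonneg hδ hc)
  linarith [hΔ' g hg c hc]

section luxNorm

variable {α : Type*} [MeasurableSpace α] {Φ : ℝ → ℝ} {μ : Measure α} {f : α → ℝ}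

lemma luxNorm_nonneg : 0 ≤ luxNorm Φ μ f :=
  Real.sInf_nonneg fun _ hδ => hδ.1.le

lemma luxNorm_le {δ : ℝ} (hδ : 0 < δ)
    (h : ∫⁻ a, ENNReal.ofReal (Φ (|f a| / δ)) ∂μ ≤ 1) : luxNorm Φ μ f ≤ δ :=
  csInf_le ⟨0, fun _ hδ => hδ.1.le⟩ ⟨hδ, h⟩

lemma one_le_lintegral_of_lt_luxNorm {δ : ℝ} (hδ : 0 < δ) (h : δ < luxNorm Φ μ f) :
    1 ≤ ∫⁻ a, ENNReal.ofReal (Φ (|f a| / δ)) ∂μ := by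
  by_contra! h'
  exact (luxNorm_le hδ h'.le).not_gt h

lemma IsYoung.apply_div_le_of_lt_luxNorm (hY : IsYoung Φ) {β : ℝ} (hβ : 0 < β)
    (hΔ' : ∀ t ≥ (0:ℝ), ∀ s ≥ (0:ℝ), youngConj Φ (t * s) ≤ β * youngConj Φ t * youngConj Φ s)
    {δ₀ δ : ℝ} (hβδ₀ : β ≤ δ₀) (hδ : 0 < δ) (hδf : δ < luxNorm Φ μ f)
    (hf : ∫⁻ a, ENNReal.ofReal (Φ |f a|) ∂μ ≠ ⊤) :
    Φ (δ / δ₀) ≤ (∫⁻ a, ENNReal.ofReal (Φ |f a|) ∂μ).toReal / δ₀ := by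
  have hδ₀ : 0 < δ₀ := hβ.trans_le hβδ₀
  -- `c` is a subgradient at `δ / δ₀`; since `δ` lies below the norm, `∫ Φ(|f| / δ) ≥ 1`.
  obtain ⟨c, hc, hct⟩ := hY.exists_youngConj_le (div_pos hδ hδ₀)
  have hΦ : Φ (δ / δ₀) ≤ δ / δ₀ * c := by linarith [hY.youngConj_nonneg c]
  have hcδ : β * youngConj Φ c ≤ δ * c := calc
    β * youngConj Φ c ≤ β * (δ / δ₀ * c) := by gcongr; linarith [hY.nonneg_s19 (div_pos hδ hδ₀).le]
    _ = β / δ₀ * (δ * c) := by ring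
    _ ≤ 1 * (δ * c) := by gcongr; exact (div_le_one hδ₀).2 hβδ₀
    _ = δ * c := one_mul _
  have hpoint : ∀ a, ENNReal.ofReal (δ * c) * ENNReal.ofReal (Φ (|f a| / δ)) ≤
      ENNReal.ofReal (Φ |f a|) := fun a => by
    rw [← ENNReal.ofReal_mul (mul_nonneg hδ.le hc)]
    refine ENNReal.ofReal_le_ofReal ?_
    simpa [mul_div_cancel₀ _ hδ.ne'] using
      hY.mul_mul_apply_le_apply_mul hΔ' hc hδ.le hcδ (div_nonneg (abs_nonneg (f a)) hδ.le)
  have hδc : ENNReal.ofReal (δ * c) ≤ ∫⁻ a, ENNReal.ofReal (Φ |f a|) ∂μ := calc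
    ENNReal.ofReal (δ * c) ≤ ENNReal.ofReal (δ * c) * ∫⁻ a, ENNReal.ofReal (Φ (|f a| / δ)) ∂μ :=
      le_mul_of_one_le_right' (one_le_lintegral_of_lt_luxNorm hδ hδf)
    _ = ∫⁻ a, ENNReal.ofReal (δ * c) * ENNReal.ofReal (Φ (|f a| / δ)) ∂μ :=
      (lintegral_const_mul' _ _ ENNReal.ofReal_ne_top).symm
    _ ≤ _ := lintegral_mono hpoint
  calc Φ (δ / δ₀) ≤ δ * c / δ₀ := by rwa [mul_div_right_comm]
    _ ≤ _ := by gcongr; exact (ENNReal.ofReal_le_iff_le_toReal hf).1 hδc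

lemma IsYoung.apply_luxNorm_div_le (hY : IsYoung Φ) {β : ℝ} (hβ : 0 < β)
    (hΔ' : ∀ t ≥ (0:ℝ), ∀ s ≥ (0:ℝ), youngConj Φ (t * s) ≤ β * youngConj Φ t * youngConj Φ s)
    {δ₀ : ℝ} (hβδ₀ : β ≤ δ₀) (hf : ∫⁻ a, ENNReal.ofReal (Φ |f a|) ∂μ ≠ ⊤) :
    Φ (luxNorm Φ μ f / δ₀) ≤ (∫⁻ a, ENNReal.ofReal (Φ |f a|) ∂μ).toReal / δ₀ := by
  have hδ₀ : 0 < δ₀ := hβ.trans_le hβδ₀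
  rcases (luxNorm_nonneg (Φ := Φ) (μ := μ) (f := f)).eq_or_lt with h0 | hpos
  · rw [← h0, zero_div, hY.map_zero]
    positivity
  have hcont : ContinuousWithinAt (fun δ => Φ (δ / δ₀)) (Ioo 0 (luxNorm Φ μ f)) _ :=
    ((hY.continuousOn.comp (continuousOn_id.div_const δ₀) fun δ hδ =>
      div_nonneg (mem_Ici.1 hδ) hδ₀.le) _ (mem_Ici.2 hpos.le)).mono fun _ hδ => mem_Ici.2 hδ.1.le
  refine hcont.closure_le (by simp [closure_Ioo hpos.ne, hpos.le]) continuousWithinAt_const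
    fun δ hδ => hY.apply_div_le_of_lt_luxNorm hβ hΔ' hβδ₀ hδ.1 hδ.2 hf

end luxNorm

section product

variable {α γ : Type*} [MeasurableSpace α] [MeasurableSpace γ] {Φ : ℝ → ℝ}
  {μ : Measure α} {ν : Measure γ} [SFinite ν] {u : α × γ → ℝ}

lemma IsYoung.ae_memLPhi_prodMk_left (hY : IsYoung Φ) (hu : MemLPhi Φ (μ.prod ν) u) :
    ∀ᵐ x ∂μ, MemLPhi Φ ν fun y => u (x, y) := by
  obtain ⟨hum, δ, hδ, hfin⟩ := hu
  have hmeas : Measurable fun p => ENNReal.ofReal (Φ (|u p| / δ)) :=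
    (hY.measurable_comp (hum.abs.div_const δ) fun p => by positivity).ennreal_ofReal
  rw [lintegral_prod _ hmeas.aemeasurable] at hfin
  filter_upwards [ae_lt_top hmeas.lintegral_prod_right' hfin.ne] with x hx
  exact ⟨hum.comp measurable_prodMk_left, δ, hδ, hx⟩

lemma IsYoung.ofReal_luxNorm_luxNorm_le (hY : IsYoung Φ) {β : ℝ} (hβ : 0 < β)
    (hΔ' : ∀ t ≥ (0:ℝ), ∀ s ≥ (0:ℝ), youngConj Φ (t * s) ≤ β * youngConj Φ t * youngConj Φ s)
    (hu : Measurable u) :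
    ENNReal.ofReal (luxNorm Φ μ fun x => luxNorm Φ ν fun y => u (x, y)) ≤
      (∫⁻ p, ENNReal.ofReal (Φ |u p|) ∂(μ.prod ν)) + ENNReal.ofReal β := by
  set A := ∫⁻ p, ENNReal.ofReal (Φ |u p|) ∂(μ.prod ν)
  by_cases hA : A = ⊤
  · simp [hA]
  have hsum : A + ENNReal.ofReal β ≠ ⊤ := ENNReal.add_ne_top.2 ⟨hA, ENNReal.ofReal_ne_top⟩
  set δ₀ := (A + ENNReal.ofReal β).toReal
  have hβδ₀ : β ≤ δ₀ := by
    rw [← ENNReal.ofReal_le_iff_le_toReal hsum]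
    exact le_add_self
  have hδ₀ : 0 < δ₀ := hβ.trans_le hβδ₀
  have hmeas : Measurable fun p => ENNReal.ofReal (Φ |u p|) :=
    (hY.measurable_comp hu.abs fun p => abs_nonneg (u p)).ennreal_ofReal
  have hTonelli : A = ∫⁻ x, ∫⁻ y, ENNReal.ofReal (Φ |u (x, y)|) ∂ν ∂μ :=
    lintegral_prod _ hmeas.aemeasurable
  have hslice : ∀ᵐ x ∂μ, ∫⁻ y, ENNReal.ofReal (Φ |u (x, y)|) ∂ν ≠ ⊤ :=
    (ae_lt_top hmeas.lintegral_prod_right' (hTonelli ▸ hA)).mono fun _ hx => hx.ne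
  suffices h : ∫⁻ x, ENNReal.ofReal (Φ (|luxNorm Φ ν fun y => u (x, y)| / δ₀)) ∂μ ≤ 1 from
    (ENNReal.ofReal_le_ofReal (luxNorm_le hδ₀ h)).trans_eq (ENNReal.ofReal_toReal hsum)
  calc ∫⁻ x, ENNReal.ofReal (Φ (|luxNorm Φ ν fun y => u (x, y)| / δ₀)) ∂μ
      ≤ ∫⁻ x, (∫⁻ y, ENNReal.ofReal (Φ |u (x, y)|) ∂ν) * (ENNReal.ofReal δ₀)⁻¹ ∂μ := by
        refine lintegral_mono_ae (hslice.mono fun x hx => ?_)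
        rw [abs_of_nonneg luxNorm_nonneg, ← div_eq_mul_inv, ← ENNReal.ofReal_toReal hx,
          ← ENNReal.ofReal_div_of_pos hδ₀]
        exact ENNReal.ofReal_le_ofReal (hY.apply_luxNorm_div_le hβ hΔ' hβδ₀ hx)
    _ = A / ENNReal.ofReal δ₀ := by
        rw [lintegral_mul_const' _ _ (ENNReal.inv_ne_top.2 (ENNReal.ofReal_pos.2 hδ₀).ne'),
          ← hTonelli, div_eq_mul_inv]
    _ ≤ 1 := ENNReal.div_le_of_le_mul <| by
        rw [one_mul, ENNReal.ofReal_toReal hsum]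
        exact le_self_add

end product

theorem stmt19_general {N₁ N₂ : ℕ} (Φ : ℝ → ℝ) (hY : IsYoung Φ)
    (Q : Set (EuclideanSpace ℝ (Fin N₁)))
    (Q₂ : Set (EuclideanSpace ℝ (Fin N₂)))
    (β : ℝ) (hβ : 0 < β)
    (hΔ'conj : ∀ t ≥ (0:ℝ), ∀ s ≥ (0:ℝ),
      youngConj Φ (t * s) ≤ β * youngConj Φ t * youngConj Φ s)
    (u : EuclideanSpace ℝ (Fin N₁) × EuclideanSpace ℝ (Fin N₂) → ℝ)
    (hu : MemLPhi Φ ((volume.restrict Q).prod (volume.restrict Q₂)) u) :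
    (∀ᵐ x₁ ∂(volume.restrict Q),
        MemLPhi Φ (volume.restrict Q₂) fun x₂ => u (x₁, x₂)) ∧
      ENNReal.ofReal (luxNorm Φ (volume.restrict Q)
          (fun x₁ => luxNorm Φ (volume.restrict Q₂) fun x₂ => u (x₁, x₂))) ≤
        (∫⁻ p, ENNReal.ofReal (Φ |u p|) ∂((volume.restrict Q).prod (volume.restrict Q₂))) +
          ENNReal.ofReal β :=
  ⟨hY.ae_memLPhi_prodMk_left hu, hY.ofReal_luxNorm_luxNorm_le hβ hΔ'conj hu.1⟩

theorem stmt19 {N₁ N₂ : ℕ} (Φ : ℝ → ℝ) (hY : IsYoung Φ)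
    (hΔ : Delta2 Φ) (hΔconj : Delta2 (youngConj Φ))
    (Q : Set (EuclideanSpace ℝ (Fin N₁))) (hQo : IsOpen Q) (hQb : Bornology.IsBounded Q)
    (Q₂ : Set (EuclideanSpace ℝ (Fin N₂))) (hQ₂o : IsOpen Q₂) (hQ₂b : Bornology.IsBounded Q₂)
    (β : ℝ) (hβ : 0 < β)
    (hΔ'conj : ∀ t ≥ (0:ℝ), ∀ s ≥ (0:ℝ),
      youngConj Φ (t * s) ≤ β * youngConj Φ t * youngConj Φ s)
    (u : EuclideanSpace ℝ (Fin N₁) × EuclideanSpace ℝ (Fin N₂) → ℝ)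
    (hum : Measurable u)
    (hu : MemLPhi Φ ((volume.restrict Q).prod (volume.restrict Q₂)) u) :
    (∀ᵐ x₁ ∂(volume.restrict Q),
        MemLPhi Φ (volume.restrict Q₂) fun x₂ => u (x₁, x₂)) ∧
      ENNReal.ofReal (luxNorm Φ (volume.restrict Q)
          (fun x₁ => luxNorm Φ (volume.restrict Q₂) fun x₂ => u (x₁, x₂))) ≤
        (∫⁻ p, ENNReal.ofReal (Φ |u p|) ∂((volume.restrict Q).prod (volume.restrict Q₂))) +
          ENNReal.ofReal β :=
  stmt19_general Φ hY Q Q₂ β hβ hΔ'conj u hu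
end
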